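/- For every even integer L ≥ 2, every real C > 0 and every integer p ≥ 1 with 4C/(π√p) < 1, the μ-measure of the set of configurations φ for which every bond (x,y) satisfies dist(φ_x, φ_y) ≥ C/√p is at least (1 − 4C/(π√p))^{L²/2}; consequently, for every β ≥ 0 and J > 0, Z_Λ(β,J,p) ≥ (1 − 4C/(π√p))^{L²/2}. -/

import Mathlib

open MeasureTheory Real

/-- The site space: the discrete torus of side `L`. -/
abbrev Torus (L : ℕ) := ZMod L × ZMod L

/-- A configuration of the non-linear model: one spin in the circle `ℝ/2πℤ` per site. -/
abbrev NLConfig (L : ℕ) := Torus L → AddCircle (2 * Real.pi)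

/-- The two unit coordinate vectors `e₁ = (1,0)` and `e₂ = (0,1)`. -/
def coordVec (L : ℕ) : Fin 2 → Torus L
  | 0 => (1, 0)
  | 1 => (0, 1)

instance : Fact ((0 : ℝ) < 2 * Real.pi) := ⟨by positivity⟩

/-- The product of normalized Haar measures on the spins. -/
noncomputable def nlMeasure (L : ℕ) [NeZero L] : Measure (NLConfig L) :=
  Measure.pi fun _ => (AddCircle.haarAddCircle : Measure (AddCircle (2 * Real.pi)))

/-- The non-linear Hamiltonian
`H_{p,J}(φ) = −J·Σ_{bonds (x,y)} ((1 + cos(φ_x − φ_y))/2)^p`. -/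
noncomputable def nlH (L : ℕ) [NeZero L] (p : ℕ) (J : ℝ) (φ : NLConfig L) : ℝ :=
  -J * ∑ x : Torus L, ∑ i : Fin 2,
    ((1 + Real.Angle.cos (φ x - φ (x + coordVec L i))) / 2) ^ p

/-- The non-linear model partition function. -/
noncomputable def nlZ (L : ℕ) [NeZero L] (β J : ℝ) (p : ℕ) : ℝ :=
  ∫ φ, Real.exp (-β * nlH L p J φ) ∂(nlMeasure L)

/-!
Colour the torus like a checkerboard, which is possible because `L` is even: every bond joins an
even and an odd site, so the four neighbours of an odd site are all even. Conditionally on the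
even spins, the odd spins are independent and each only has to avoid four arcs of radius
`δ = C/√p`, whose normalized Haar measure is at most `4δ/π` in total; with `L²/2` odd sites this
gives the bound. The partition function is at least `1 ≥ (1 - 4δ/π)^{L²/2}`, since `H ≤ 0`.
-/

open scoped ENNReal

namespace AddCircle

variable {T : ℝ} [hT : Fact (0 < T)]

theorem haarAddCircle_ball_le (c : AddCircle T) (δ : ℝ) :
    haarAddCircle (Metric.ball c δ) ≤ ENNReal.ofReal (2 * δ / T) := by
  have hvol : volume (Metric.ball c δ) ≤ ENNReal.ofReal (2 * δ) :=
    calc volume (Metric.ball c δ) ≤ volume (Metric.closedBall c δ) :=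
          measure_mono Metric.ball_subset_closedBall
      _ = ENNReal.ofReal (min T (2 * δ)) := volume_closedBall T δ
      _ ≤ ENNReal.ofReal (2 * δ) := ENNReal.ofReal_le_ofReal (min_le_right _ _)
  rw [volume_eq_smul_haarAddCircle, Measure.smul_apply, smul_eq_mul, mul_comm] at hvol
  rwa [ENNReal.ofReal_div_of_pos hT.out, ENNReal.le_div_iff_mul_le
    (Or.inl (ENNReal.ofReal_pos.2 hT.out).ne') (Or.inl ENNReal.ofReal_ne_top)]

theorem ofReal_le_haarAddCircle_setOf_le_dist {ι : Type*} [Fintype ι] (c : ι → AddCircle T)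
    {δ : ℝ} (hδ : 0 ≤ δ) :
    ENNReal.ofReal (1 - Fintype.card ι * (2 * δ / T)) ≤
      haarAddCircle {θ | ∀ j, δ ≤ dist θ (c j)} := by
  have hset : {θ | ∀ j, δ ≤ dist θ (c j)} = (⋃ j, Metric.ball (c j) δ)ᶜ := by
    ext θ
    simp
  have hunion : haarAddCircle (⋃ j, Metric.ball (c j) δ) ≤
      ENNReal.ofReal (Fintype.card ι * (2 * δ / T)) :=
    calc haarAddCircle (⋃ j, Metric.ball (c j) δ)
        ≤ ∑ j, haarAddCircle (Metric.ball (c j) δ) := measure_iUnion_fintype_le _ _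
      _ ≤ ∑ _j : ι, ENNReal.ofReal (2 * δ / T) :=
          Finset.sum_le_sum fun j _ => haarAddCircle_ball_le (c j) δ
      _ = ENNReal.ofReal (Fintype.card ι * (2 * δ / T)) := by
          rw [Finset.sum_const, Finset.card_univ, nsmul_eq_mul,
            ENNReal.ofReal_mul (Nat.cast_nonneg _), ENNReal.ofReal_natCast]
  rw [hset, prob_compl_eq_one_sub (.iUnion fun j => Metric.isOpen_ball.measurableSet),
    ENNReal.ofReal_sub _ (by have := hT.out; positivity), ENNReal.ofReal_one]
  exact tsub_le_tsub_left hunion 1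

end AddCircle

theorem MeasureTheory.le_measure_pi_of_le_sections {ι : Type*} [Fintype ι] {α : ι → Type*}
    [∀ i, MeasurableSpace (α i)] (μ : ∀ i, Measure (α i)) [∀ i, IsProbabilityMeasure (μ i)]
    (p : ι → Prop) [DecidablePred p] {E : Set (∀ i, α i)} (hE : MeasurableSet E) {q : ℝ≥0∞}
    (h : ∀ η : ∀ i : Subtype p, α i, q ≤ Measure.pi (fun i : {i // ¬p i} => μ i)
      {σ | (MeasurableEquiv.piEquivPiSubtypeProd α p).symm (η, σ) ∈ E}) :
    q ≤ Measure.pi μ E := by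
  set e := MeasurableEquiv.piEquivPiSubtypeProd α p
  rw [← ((measurePreserving_piEquivPiSubtypeProd μ p).symm e).measure_preimage_equiv E,
    Measure.prod_apply (e.symm.measurable hE)]
  calc q = ∫⁻ _η, q ∂Measure.pi (fun i : Subtype p => μ i) := by simp
    _ ≤ _ := lintegral_mono h

section Checkerboard

variable {L : ℕ} (hL : 2 ∣ L)

def checkerParity (x : Torus L) : ZMod 2 := ZMod.castHom hL (ZMod 2) (x.1 + x.2)

theorem checkerParity_add_coordVec (x : Torus L) (i : Fin 2) :
    checkerParity hL (x + coordVec L i) = checkerParity hL x + 1 := by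
  have hsum : (coordVec L i).1 + (coordVec L i).2 = 1 := by fin_cases i <;> simp [coordVec]
  rw [checkerParity, checkerParity, Prod.fst_add, Prod.snd_add, add_add_add_comm, hsum,
    map_add, map_one]

theorem checkerParity_sub_coordVec (x : Torus L) (i : Fin 2) :
    checkerParity hL (x - coordVec L i) = checkerParity hL x + 1 := by
  rw [← sub_add_cancel x (coordVec L i), checkerParity_add_coordVec, add_sub_cancel_right]
  generalize checkerParity hL (x - coordVec L i) = a
  revert a
  decide

theorem checkerParity_add_coordVec_eq_zero_iff (x : Torus L) (i : Fin 2) :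
    checkerParity hL (x + coordVec L i) = 0 ↔ checkerParity hL x ≠ 0 := by
  rw [checkerParity_add_coordVec]
  generalize checkerParity hL x = a
  revert a
  decide

theorem checkerParity_sub_coordVec_eq_zero_iff (x : Torus L) (i : Fin 2) :
    checkerParity hL (x - coordVec L i) = 0 ↔ checkerParity hL x ≠ 0 := by
  rw [checkerParity_sub_coordVec]
  generalize checkerParity hL x = a
  revert a
  decide

def evenNeighbour (b : {x : Torus L // checkerParity hL x ≠ 0}) :
    Fin 2 ⊕ Fin 2 → {x : Torus L // checkerParity hL x = 0} :=
  Sum.elim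
    (fun i => ⟨b.1 + coordVec L i, (checkerParity_add_coordVec_eq_zero_iff hL _ _).2 b.2⟩)
    (fun i => ⟨b.1 - coordVec L i, (checkerParity_sub_coordVec_eq_zero_iff hL _ _).2 b.2⟩)

variable [NeZero L]

theorem card_checkerParity_ne_zero_le :
    Fintype.card {x : Torus L // checkerParity hL x ≠ 0} ≤ L ^ 2 / 2 := by
  have hshift : Fintype.card {x : Torus L // checkerParity hL x ≠ 0} ≤
      Fintype.card {x : Torus L // checkerParity hL x = 0} :=
    Fintype.card_le_of_injective
      (fun b => ⟨b.1 + coordVec L 0, (checkerParity_add_coordVec_eq_zero_iff hL _ _).2 b.2⟩)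
      fun b b' h => Subtype.ext (add_right_cancel (congrArg Subtype.val h))
  have hsplit : Fintype.card {x : Torus L // checkerParity hL x ≠ 0} =
      Fintype.card (Torus L) - Fintype.card {x : Torus L // checkerParity hL x = 0} :=
    Fintype.card_subtype_compl _
  have hle := Fintype.card_subtype_le (fun x : Torus L => checkerParity hL x = 0)
  have hcard : Fintype.card (Torus L) = L ^ 2 := by simp [ZMod.card, sq]
  omega

end Checkerboard

def disorderedConfigs (L : ℕ) (δ : ℝ) : Set (NLConfig L) :=
  {φ | ∀ x i, δ ≤ dist (φ x) (φ (x + coordVec L i))}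

theorem measurableSet_disorderedConfigs (L : ℕ) [NeZero L] (δ : ℝ) :
    MeasurableSet (disorderedConfigs L δ) := by
  simp only [disorderedConfigs, Set.ofPred_forall]
  exact .iInter fun x => .iInter fun i => measurableSet_le measurable_const
    ((measurable_pi_apply x).dist (measurable_pi_apply _))

theorem pi_setOf_le_dist_evenNeighbour_subset {L : ℕ} (hL : 2 ∣ L)
    (η : {x : Torus L // checkerParity hL x = 0} → AddCircle (2 * π)) (δ : ℝ) :
    Set.univ.pi (fun b => {θ | ∀ j, δ ≤ dist θ (η (evenNeighbour hL b j))}) ⊆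
      {σ | (MeasurableEquiv.piEquivPiSubtypeProd (fun _ : Torus L => AddCircle (2 * π))
        (fun x => checkerParity hL x = 0)).symm (η, σ) ∈ disorderedConfigs L δ} := by
  intro σ hσ x i
  simp only [MeasurableEquiv.piEquivPiSubtypeProd_symm_apply]
  by_cases hx : checkerParity hL x = 0
  · have hx' : checkerParity hL (x + coordVec L i) ≠ 0 := by
      simpa [checkerParity_add_coordVec_eq_zero_iff] using hx
    rw [dif_pos hx, dif_neg hx', dist_comm]
    simpa [evenNeighbour] using hσ ⟨x + coordVec L i, hx'⟩ trivial (Sum.inr i)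
  · rw [dif_neg hx, dif_pos ((checkerParity_add_coordVec_eq_zero_iff hL x i).2 hx)]
    exact hσ ⟨x, hx⟩ trivial (Sum.inl i)

theorem ofReal_pow_le_nlMeasure_disorderedConfigs {L : ℕ} [NeZero L] (hL : Even L) {δ : ℝ}
    (hδ : 0 ≤ δ) :
    ENNReal.ofReal (1 - 4 * δ / π) ^ (L ^ 2 / 2) ≤ nlMeasure L (disorderedConfigs L δ) := by
  have h2L := hL.two_dvd
  refine le_measure_pi_of_le_sections _ (fun x => checkerParity h2L x = 0)
    (measurableSet_disorderedConfigs L δ) fun η => ?_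
  have hfactor : ENNReal.ofReal (1 - 4 * δ / π) ≤ 1 := ENNReal.ofReal_le_one.2 (by
    have := pi_pos; linarith [show 0 ≤ 4 * δ / π by positivity])
  calc ENNReal.ofReal (1 - 4 * δ / π) ^ (L ^ 2 / 2)
      ≤ ENNReal.ofReal (1 - 4 * δ / π) ^ Fintype.card {x : Torus L // checkerParity h2L x ≠ 0} :=
        pow_le_pow_right_of_le_one' hfactor (card_checkerParity_ne_zero_le h2L)
    _ = ∏ _b : {x : Torus L // checkerParity h2L x ≠ 0}, ENNReal.ofReal (1 - 4 * δ / π) := by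
        rw [Finset.prod_const, Finset.card_univ]
    _ ≤ ∏ b, AddCircle.haarAddCircle {θ | ∀ j, δ ≤ dist θ (η (evenNeighbour h2L b j))} := by
        refine Finset.prod_le_prod' fun b _ => ?_
        have hcount : (Fintype.card (Fin 2 ⊕ Fin 2) : ℝ) * (2 * δ / (2 * π)) = 4 * δ / π := by
          simp only [Fintype.card_sum, Fintype.card_fin]
          field_simp
          ring
        simpa only [hcount, Function.comp_apply] using
          AddCircle.ofReal_le_haarAddCircle_setOf_le_dist (η ∘ evenNeighbour h2L b) hδ
    _ = Measure.pi (fun _ => AddCircle.haarAddCircle)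
          (Set.univ.pi fun b => {θ | ∀ j, δ ≤ dist θ (η (evenNeighbour h2L b j))}) :=
        (Measure.pi_pi _ _).symm
    _ ≤ _ := measure_mono (pi_setOf_le_dist_evenNeighbour_subset h2L η δ)

instance (L : ℕ) [NeZero L] : IsProbabilityMeasure (nlMeasure L) := by
  unfold nlMeasure
  infer_instance

theorem nlH_nonpos (L : ℕ) [NeZero L] (p : ℕ) {J : ℝ} (hJ : 0 ≤ J) (φ : NLConfig L) :
    nlH L p J φ ≤ 0 := by
  have hterm (θ : Real.Angle) : 0 ≤ ((1 + θ.cos) / 2) ^ p := by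
    have := Real.neg_one_le_cos θ.toReal
    rw [Real.Angle.cos_toReal] at this
    exact pow_nonneg (by linarith) p
  rw [nlH, neg_mul]
  exact neg_nonpos.2 (mul_nonneg hJ (Finset.sum_nonneg fun x _ =>
    Finset.sum_nonneg fun i _ => hterm _))

theorem continuous_nlH (L : ℕ) [NeZero L] (p : ℕ) (J : ℝ) : Continuous (nlH L p J) := by
  have hcos := Real.Angle.continuous_cos
  unfold nlH
  fun_prop

theorem one_le_nlZ (L : ℕ) [NeZero L] (p : ℕ) {β J : ℝ} (hβ : 0 ≤ β) (hJ : 0 ≤ J) :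
    1 ≤ nlZ L β J p := by
  have hcont : Continuous fun φ => exp (-β * nlH L p J φ) :=
    continuous_exp.comp (continuous_const.mul (continuous_nlH L p J))
  have hint : Integrable (fun φ => exp (-β * nlH L p J φ)) (nlMeasure L) :=
    hcont.integrable_of_hasCompactSupport (.of_compactSpace _)
  calc (1 : ℝ) = ∫ _φ, 1 ∂nlMeasure L := by simp
    _ ≤ nlZ L β J p := integral_mono (integrable_const 1) hint fun φ =>
        one_le_exp (mul_nonneg_of_nonpos_of_nonpos (neg_nonpos.2 hβ) (nlH_nonpos L p hJ φ))

/-- the 'disordered' lower bound on the non-linear model: the set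
of configurations all of whose bonds have angle difference at least `C/√p` has
measure at least `(1 − 4C/(π√p))^{L²/2}`, and hence so is the partition function
bounded below. -/
theorem nl_disordered_lower_bound (L : ℕ) (hL : 2 ≤ L) (hLeven : Even L)
    (C : ℝ) (hC : 0 < C) (p : ℕ)
    (hsmall : 4 * C / (Real.pi * Real.sqrt p) < 1) :
    haveI : NeZero L := ⟨by omega⟩
    (ENNReal.ofReal ((1 - 4 * C / (Real.pi * Real.sqrt p)) ^ (L ^ 2 / 2)) ≤
      nlMeasure L {φ : NLConfig L | ∀ x : Torus L, ∀ i : Fin 2,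
        C / Real.sqrt p ≤ dist (φ x) (φ (x + coordVec L i))}) ∧
    ∀ β J : ℝ, 0 ≤ β → 0 < J →
      nlZ L β J p ≥ (1 - 4 * C / (Real.pi * Real.sqrt p)) ^ (L ^ 2 / 2) := by
  have : NeZero L := ⟨by omega⟩
  have hε : 0 ≤ 4 * C / (π * √p) := by positivity
  refine ⟨?_, fun β J hβ hJ => ?_⟩
  · rw [ENNReal.ofReal_pow (by linarith), show 4 * C / (π * √p) = 4 * (C / √p) / π by ring]
    exact ofReal_pow_le_nlMeasure_disorderedConfigs hLeven (by positivity)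
  · exact (pow_le_one₀ (by linarith) (by linarith)).trans (one_le_nlZ L p hβ hJ.le)
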